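/- arXiv:1102.4985 — 8 statements merged into one kernel-verified Lean document; each statement's English description precedes it below -/
import Mathlib

section
/- Let F be a commutative ring, k ∈ N, and y : N^k → F a vertex model with partition function f_y. For every graph G = (V,E), every subset U ⊆ V with |U| = k+1, and every map s : U → V, we have Σ_{π ∈ S_U} sgn(π) · f_y(G_{s∘π}) = 0, where G_t denotes the graph obtained from G by adding the edges {u t(u) : u ∈ U} (possibly creating multiple edges or loops). -/
structure MGraph : Type 1 where
  V : Type
  E : Type
  [fintV : Fintype V]
  [fintE : Fintype E]
  [decV : DecidableEq V]
  [decE : DecidableEq E]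
  ends : E → V × V

attribute [instance] MGraph.fintV MGraph.fintE MGraph.decV MGraph.decE

namespace MGraph

/-- multiplicity with which vertex `v` occurs among the endpoints of edge `e`
(a loop counts twice). -/
def inc (G : MGraph) (v : G.V) (e : G.E) : ℕ :=
  (if (G.ends e).1 = v then 1 else 0) + (if (G.ends e).2 = v then 1 else 0)

/-- `κ(δ(v))` : the incidence vector in `ℕ^k` of the multiset of colors seen at `v`. -/
def degVec (G : MGraph) {k : ℕ} (κ : G.E → Fin k) (v : G.V) : Fin k → ℕ :=
  fun c => ∑ e : G.E, if κ e = c then G.inc v e else 0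

/-- the partition function of the `k`-color vertex model `y`. -/
def pf {F : Type} [CommRing F] (k : ℕ) (y : (Fin k → ℕ) → F) (G : MGraph) : F :=
  ∑ κ : G.E → Fin k, ∏ v : G.V, y (G.degVec κ v)

def empty : MGraph where
  V := Empty
  E := Empty
  ends := Empty.elim

def disjUnion (G H : MGraph) : MGraph where
  V := G.V ⊕ H.V
  E := G.E ⊕ H.E
  ends := Sum.elim (fun e => (Sum.inl (G.ends e).1, Sum.inl (G.ends e).2))
    (fun e => (Sum.inr (H.ends e).1, Sum.inr (H.ends e).2))

/-- `G_t` : add the edges `{u t(u) | u ∈ U}`. -/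
def addEdges (G : MGraph) (U : Finset G.V) (t : {v // v ∈ U} → G.V) : MGraph where
  V := G.V
  E := G.E ⊕ {v // v ∈ U}
  ends := Sum.elim G.ends (fun u => (u.1, t u))

/-- `G/t` : add the edges `{u t(u) | u ∈ U}` and contract them. -/
noncomputable def contract (G : MGraph) (U : Finset G.V) (t : {v // v ∈ U} → G.V) : MGraph :=
  letI s : Setoid G.V := Relation.EqvGen.setoid (fun a b => ∃ h : a ∈ U, t ⟨a, h⟩ = b)
  letI : DecidableEq (Quotient s) := Classical.decEq _
  letI : Fintype (Quotient s) := Fintype.ofSurjective (Quotient.mk s)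
    (fun q => Quot.exists_rep q)
  { V := Quotient s
    E := G.E
    ends := fun e => (Quotient.mk s (G.ends e).1, Quotient.mk s (G.ends e).2) }

/-- isomorphism of multigraphs. -/
structure Iso (G H : MGraph) where
  vEquiv : G.V ≃ H.V
  eEquiv : G.E ≃ H.E
  ends_eq : ∀ e, H.ends (eEquiv e) = Prod.map vEquiv vEquiv (G.ends e) ∨
    H.ends (eEquiv e) = (Prod.map vEquiv vEquiv (G.ends e)).swap

end MGraph

/-!
Expand `f_y(G_{s∘π})` as a sum over edge colorings `κ` of `G.E ⊕ U`, which is the same edge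
set for every `π`, and exchange the sums. Since `|U| = k + 1 > k`, each `κ` gives two distinct
`u, v ∈ U` whose new edges have the same color. Rerouting these two edges, i.e. replacing `π`
by `π * swap u v`, leaves every color-degree vector unchanged but flips the sign, so the
signed sum over `π` vanishes for each `κ` separately.
-/

open Equiv Finset

theorem Equiv.Perm.sum_sign_mul_eq_zero_of_mul_swap {α R : Type*} [Fintype α] [DecidableEq α]
    [Ring R] (f : Perm α → R) {a b : α} (hab : a ≠ b) (hf : ∀ σ, f (σ * swap a b) = f σ) :
    ∑ σ : Perm α, ((Perm.sign σ : ℤ) : R) * f σ = 0 :=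
  sum_ninvolution (· * swap a b) (fun σ => by simp [hf, Perm.sign_swap hab])
    (fun _ _ => (not_congr mul_swap_eq_iff).mpr hab) (fun _ => mem_univ _)
    (mul_swap_involutive a b)

namespace MGraph

variable (G : MGraph) (U : Finset G.V)

theorem pf_addEdges {F : Type} [CommRing F] (k : ℕ) (y : (Fin k → ℕ) → F)
    (t : {v // v ∈ U} → G.V) :
    pf k y (G.addEdges U t) =
      ∑ κ : G.E ⊕ {v // v ∈ U} → Fin k, ∏ w : G.V, y ((G.addEdges U t).degVec κ w) :=
  rfl

theorem degVec_addEdges_apply {k : ℕ} (t : {v // v ∈ U} → G.V)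
    (κ : G.E ⊕ {v // v ∈ U} → Fin k) (w : G.V) (c : Fin k) :
    (G.addEdges U t).degVec κ w c =
      G.degVec (κ ∘ .inl) w c +
        ((∑ u : {v // v ∈ U}, if κ (.inr u) = c then (if (u : G.V) = w then 1 else 0) else 0) +
          ∑ u : {v // v ∈ U}, if κ (.inr u) = c then (if t u = w then 1 else 0) else 0) := by
  rw [← sum_add_distrib]
  refine (Fintype.sum_sum_type _).trans (congrArg _ (sum_congr rfl fun u _ => ?_))
  rw [ite_add_ite, add_zero]
  rfl

theorem degVec_addEdges_comp_perm {k : ℕ} (t : {v // v ∈ U} → G.V)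
    (κ : G.E ⊕ {v // v ∈ U} → Fin k) (σ : Perm {v // v ∈ U})
    (hσ : ∀ u, κ (.inr (σ u)) = κ (.inr u)) (w : G.V) :
    (G.addEdges U (t ∘ σ)).degVec κ w = (G.addEdges U t).degVec κ w := by
  funext c
  have reindex := Equiv.sum_comp σ fun u => if κ (.inr u) = c then (if t u = w then 1 else 0) else 0
  simp only [hσ] at reindex
  simp only [degVec_addEdges_apply, Function.comp_apply, reindex]

end MGraph

/-- signed sum of partition function values over edge additions on a
set of `k+1` vertices vanishes. -/
theorem pf_signed_addEdges_eq_zero {F : Type} [CommRing F] (k : ℕ) (y : (Fin k → ℕ) → F)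
    (G : MGraph) (U : Finset G.V) (hU : U.card = k + 1) (s : {v // v ∈ U} → G.V) :
    ∑ π : Equiv.Perm {v // v ∈ U},
      ((Equiv.Perm.sign π : ℤ) : F) * MGraph.pf k y (G.addEdges U (s ∘ π)) = 0 := by
  simp only [MGraph.pf_addEdges, mul_sum]
  rw [sum_comm]
  refine sum_eq_zero fun κ _ => ?_
  have hcard : Fintype.card (Fin k) < Fintype.card {v // v ∈ U} := by simp [hU]
  obtain ⟨u, v, huv, hκ⟩ := Fintype.exists_ne_map_eq_of_card_lt (fun u => κ (.inr u)) hcard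
  refine Perm.sum_sign_mul_eq_zero_of_mul_swap _ huv fun π => prod_congr rfl fun w _ => ?_
  exact congrArg y <| G.degVec_addEdges_comp_perm U (s ∘ π) κ (swap u v)
    (apply_swap_eq_self (v := fun u => κ (.inr u)) hκ) w
end

section
/- Let F be a commutative ring, k, r ∈ N, and y : N^k → F a vertex model whose moment matrix M_y = (y_{α+β})_{α,β ∈ N^k} has rank at most r. Then for every graph G = (V,E), every U ⊆ V with |U| = r+1, and every s : U → V \ U, we have Σ_{π ∈ S_U} sgn(π) · f_y(G/(s∘π)) = 0, where G/t is obtained from G by adding the edges {u t(u) : u ∈ U} and contracting them. -/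
/-! If `s` avoids `U`, the vertices of `G/t` for `t = s ∘ π` are the vertices `w ∉ U`, and under a
colouring `κ` the vertex `w` sees the colours of `w` together with those of every `u ∈ U` with
`t u = w`. For injective `s` the vertex `s u` thus sees `κ(δ(s u)) + κ(δ(π⁻¹ u))`, so for each `κ`
the signed sum over `π` is a common factor (the vertices outside `U ∪ s(U)`) times the determinant
of the `(r+1) × (r+1)` submatrix `(y_{κ(δ(s u)) + κ(δ(u'))})_{u,u'}` of `M_y`, which vanishes.
If `s u₁ = s u₂` with `u₁ ≠ u₂`, the transposition of `u₁` and `u₂` leaves `s ∘ π` unchanged and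
flips the sign, so the terms cancel in pairs. -/

theorem Equiv.Perm.sum_sign_mul_eq_zero_of_swap_mul {α R : Type*} [Fintype α] [DecidableEq α]
    [CommRing R] {f : Equiv.Perm α → R} {i j : α} (hij : i ≠ j)
    (hf : ∀ σ, f (Equiv.swap i j * σ) = f σ) :
    ∑ σ : Equiv.Perm α, ((Equiv.Perm.sign σ : ℤ) : R) * f σ = 0 :=
  Finset.sum_involution (fun σ _ => Equiv.swap i j * σ)
    (fun σ _ => by simp [hf, Equiv.Perm.sign_swap hij])
    (fun σ _ _ => (not_congr Equiv.swap_mul_eq_iff).2 hij) (fun _ _ => Finset.mem_univ _)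
    (fun σ _ => Equiv.swap_mul_involutive i j σ)

theorem Matrix.det_of_add_eq_zero_of_card_eq {A F : Type*} [Add A] [CommRing F] {r : ℕ}
    {y : A → F} (hrank : ∀ α β : Fin (r + 1) → A, (Matrix.of fun i j => y (α i + β j)).det = 0)
    {ι : Type*} [Fintype ι] [DecidableEq ι] (hι : Fintype.card ι = r + 1) (α β : ι → A) :
    (Matrix.of fun i j => y (α i + β j)).det = 0 := by
  let e := Fintype.equivFinOfCardEq hι
  rw [← Matrix.det_submatrix_equiv_self e.symm]
  exact hrank (α ∘ e.symm) (β ∘ e.symm)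

namespace MGraph

section Contract

variable {G : MGraph} {U : Finset G.V} {t : {v // v ∈ U} → G.V}

/-- When `t` takes values outside `U`, every class of `G.contract U t` contains exactly one vertex
outside `U`, namely `contractRep t v` for each of its members `v`. -/
def contractRep (t : {v // v ∈ U} → G.V) (v : G.V) : G.V :=
  if h : v ∈ U then t ⟨v, h⟩ else v

noncomputable def contractMk (t : {v // v ∈ U} → G.V) (v : G.V) : (G.contract U t).V :=
  Quotient.mk _ v

theorem contractMk_surjective (t : {v // v ∈ U} → G.V) : Function.Surjective (contractMk t) :=
  Quotient.mk_surjective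

theorem contract_ends (t : {v // v ∈ U} → G.V) (e : G.E) :
    (G.contract U t).ends e = (contractMk t (G.ends e).1, contractMk t (G.ends e).2) :=
  rfl

theorem contractRep_of_mem {v : G.V} (h : v ∈ U) : contractRep t v = t ⟨v, h⟩ := dif_pos h

theorem contractRep_of_notMem {v : G.V} (h : v ∉ U) : contractRep t v = v := dif_neg h

theorem filter_contractRep_eq_of_notMem_range {w : G.V} (hw : w ∉ U)
    (hrange : w ∉ Finset.univ.image t) :
    Finset.univ.filter (contractRep t · = w) = {w} := by
  ext v
  simp only [Finset.mem_filter, Finset.mem_univ, true_and, Finset.mem_singleton]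
  refine ⟨fun h => ?_, by rintro rfl; exact contractRep_of_notMem hw⟩
  by_cases hv : v ∈ U
  · rw [contractRep_of_mem hv] at h
    exact absurd (Finset.mem_image.2 ⟨_, Finset.mem_univ _, h⟩) hrange
  · rwa [contractRep_of_notMem hv] at h

variable (ht : ∀ u, t u ∉ U)
include ht

theorem contractRep_notMem (v : G.V) : contractRep t v ∉ U := by
  by_cases h : v ∈ U
  · rw [contractRep_of_mem h]; exact ht _
  · rwa [contractRep_of_notMem h]

theorem eqvGen_iff_contractRep_eq {a b : G.V} :
    Relation.EqvGen (fun a b => ∃ h : a ∈ U, t ⟨a, h⟩ = b) a b ↔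
      contractRep t a = contractRep t b := by
  have toRep (v : G.V) :
      Relation.EqvGen (fun a b => ∃ h : a ∈ U, t ⟨a, h⟩ = b) v (contractRep t v) := by
    by_cases hv : v ∈ U
    · rw [contractRep_of_mem hv]; exact .rel _ _ ⟨hv, rfl⟩
    · rw [contractRep_of_notMem hv]; exact .refl v
  refine ⟨fun h => ?_, fun h => (toRep a).trans _ _ _ (h ▸ (toRep b).symm _ _)⟩
  induction h with
  | rel a b hab =>
    obtain ⟨ha, rfl⟩ := hab
    rw [contractRep_of_mem ha, contractRep_of_notMem (ht _)]
  | refl => rfl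
  | symm _ _ _ ih => exact ih.symm
  | trans _ _ _ _ _ ih₁ ih₂ => exact ih₁.trans ih₂

theorem contractMk_eq_iff {a b : G.V} :
    contractMk t a = contractMk t b ↔ contractRep t a = contractRep t b :=
  Quotient.eq.trans (eqvGen_iff_contractRep_eq ht)

theorem contractMk_eq_iff_of_notMem {a w : G.V} (hw : w ∉ U) :
    contractMk t a = contractMk t w ↔ contractRep t a = w := by
  rw [contractMk_eq_iff ht, contractRep_of_notMem hw]

theorem inc_contractMk {w : G.V} (hw : w ∉ U) (e : G.E) :
    (G.contract U t).inc (contractMk t w) e =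
      ∑ v ∈ Finset.univ.filter (contractRep t · = w), G.inc v e := by
  simp only [inc, contract_ends, contractMk_eq_iff_of_notMem ht hw, Finset.sum_add_distrib,
    Finset.sum_ite_eq, Finset.mem_filter, Finset.mem_univ, true_and]

theorem degVec_contractMk {k : ℕ} (κ : G.E → Fin k) {w : G.V} (hw : w ∉ U) :
    (G.contract U t).degVec κ (contractMk t w) =
      ∑ v ∈ Finset.univ.filter (contractRep t · = w), G.degVec κ v := by
  ext c
  simp only [degVec, Finset.sum_apply]
  calc (∑ e : G.E, if κ e = c then (G.contract U t).inc (contractMk t w) e else 0)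
      = ∑ e : G.E, if κ e = c then ∑ v ∈ Finset.univ.filter (contractRep t · = w), G.inc v e
          else 0 := Finset.sum_congr rfl fun e _ => by rw [inc_contractMk ht hw]
    _ = _ := by simp only [Finset.ite_sum_zero]; exact Finset.sum_comm

theorem pf_contract {F : Type} [CommRing F] (k : ℕ) (y : (Fin k → ℕ) → F) :
    pf k y (G.contract U t) = ∑ κ : G.E → Fin k,
      ∏ w ∈ Uᶜ, y (∑ v ∈ Finset.univ.filter (contractRep t · = w), G.degVec κ v) := by
  refine Finset.sum_congr rfl fun κ _ => .symm <| Finset.prod_nbij (contractMk t)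
    (fun _ _ => Finset.mem_univ _) (fun a ha b hb hab => ?_) (fun q _ => ?_)
    (fun w hw => by rw [degVec_contractMk ht κ (Finset.mem_compl.1 hw)])
  · rwa [contractMk_eq_iff ht, contractRep_of_notMem (Finset.mem_compl.1 ha),
      contractRep_of_notMem (Finset.mem_compl.1 hb)] at hab
  · obtain ⟨v, rfl⟩ := contractMk_surjective t q
    refine ⟨contractRep t v, Finset.mem_compl.2 (contractRep_notMem ht v), ?_⟩
    rw [contractMk_eq_iff ht, contractRep_of_notMem (contractRep_notMem ht v)]

theorem filter_contractRep_eq_apply (hinj : Function.Injective t) (u : {v // v ∈ U}) :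
    Finset.univ.filter (contractRep t · = t u) = {t u, (u : G.V)} := by
  ext v
  simp only [Finset.mem_filter, Finset.mem_univ, true_and, Finset.mem_insert,
    Finset.mem_singleton]
  constructor
  · intro h
    by_cases hv : v ∈ U
    · rw [contractRep_of_mem hv] at h
      exact .inr (congrArg Subtype.val (hinj h))
    · rw [contractRep_of_notMem hv] at h
      exact .inl h
  · rintro (rfl | rfl)
    · exact contractRep_of_notMem (ht u)
    · exact contractRep_of_mem u.2

theorem pf_contract_of_injective (hinj : Function.Injective t) {F : Type} [CommRing F] (k : ℕ)
    (y : (Fin k → ℕ) → F) :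
    pf k y (G.contract U t) = ∑ κ : G.E → Fin k,
      (∏ w ∈ Uᶜ \ Finset.univ.image t, y (G.degVec κ w)) *
        ∏ u, y (G.degVec κ (t u) + G.degVec κ u) := by
  have himage : Finset.univ.image t ⊆ Uᶜ := by
    intro w hw
    obtain ⟨u, -, rfl⟩ := Finset.mem_image.1 hw
    exact Finset.mem_compl.2 (ht u)
  rw [pf_contract ht]
  refine Finset.sum_congr rfl fun κ _ => ?_
  rw [← Finset.prod_sdiff himage, Finset.prod_image hinj.injOn]
  congr 1
  · refine Finset.prod_congr rfl fun w hw => ?_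
    obtain ⟨hwU, hrange⟩ := Finset.mem_sdiff.1 hw
    rw [filter_contractRep_eq_of_notMem_range (Finset.mem_compl.1 hwU) hrange,
      Finset.sum_singleton]
  · refine Finset.prod_congr rfl fun u _ => ?_
    have hne : t u ≠ u := fun h => ht u (h ▸ u.2)
    rw [filter_contractRep_eq_apply ht hinj, Finset.sum_pair hne]

end Contract

theorem sum_sign_mul_pf_contract_eq_zero_of_injective {F : Type} [CommRing F] {k r : ℕ}
    {y : (Fin k → ℕ) → F}
    (hrank : ∀ α β : Fin (r + 1) → (Fin k → ℕ), (Matrix.of fun i j => y (α i + β j)).det = 0)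
    {G : MGraph} {U : Finset G.V} (hU : U.card = r + 1) {s : {v // v ∈ U} → G.V}
    (hs : ∀ u, s u ∉ U) (hinj : Function.Injective s) :
    ∑ π : Equiv.Perm {v // v ∈ U},
      ((Equiv.Perm.sign π : ℤ) : F) * pf k y (G.contract U (s ∘ π)) = 0 := by
  set C : (G.E → Fin k) → F := fun κ => ∏ w ∈ Uᶜ \ Finset.univ.image s, y (G.degVec κ w)
  set A : (G.E → Fin k) → Matrix {v // v ∈ U} {v // v ∈ U} F :=
    fun κ => Matrix.of fun i j => y (G.degVec κ (s i) + G.degVec κ j)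
  have hterm (π : Equiv.Perm {v // v ∈ U}) :
      ((Equiv.Perm.sign π : ℤ) : F) * pf k y (G.contract U (s ∘ π)) =
        ∑ κ, C κ * (((Equiv.Perm.sign π : ℤ) : F) * ∏ u, A κ (π u) u) := by
    have himage : Finset.univ.image (s ∘ π) = Finset.univ.image s := by
      rw [← Finset.image_image, Finset.image_univ_equiv]
    rw [pf_contract_of_injective (t := s ∘ π) (fun u => hs (π u)) (hinj.comp π.injective),
      himage, Finset.mul_sum]
    refine Finset.sum_congr rfl fun κ _ => ?_
    simp only [A, C, Matrix.of_apply, Function.comp_apply]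
    ring
  calc _ = ∑ κ, C κ * (A κ).det := by
        simp only [hterm, Matrix.det_apply']
        rw [Finset.sum_comm]
        simp only [Finset.mul_sum]
    _ = 0 := Finset.sum_eq_zero fun κ _ => by
        rw [Matrix.det_of_add_eq_zero_of_card_eq hrank (by simp [hU]), mul_zero]

end MGraph

/-- if all `(r+1) × (r+1)` minors of the moment matrix of `y` vanish
(i.e. the moment matrix has rank at most `r`), then the signed sum of partition
function values over contractions on a set of `r+1` vertices vanishes. -/
theorem pf_signed_contract_eq_zero {F : Type} [CommRing F] (k r : ℕ) (y : (Fin k → ℕ) → F)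
    (hrank : ∀ α β : Fin (r + 1) → (Fin k → ℕ),
      (Matrix.of fun i j => y (α i + β j)).det = 0)
    (G : MGraph) (U : Finset G.V) (hU : U.card = r + 1)
    (s : {v // v ∈ U} → G.V) (hs : ∀ u, s u ∉ U) :
    ∑ π : Equiv.Perm {v // v ∈ U},
      ((Equiv.Perm.sign π : ℤ) : F) * MGraph.pf k y (G.contract U (s ∘ π)) = 0 := by
  by_cases hinj : Function.Injective s
  · exact MGraph.sum_sign_mul_pf_contract_eq_zero_of_injective hrank hU hs hinj
  · obtain ⟨u₁, u₂, hs₁₂, hne⟩ := Function.not_injective_iff.1 hinj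
    refine Equiv.Perm.sum_sign_mul_eq_zero_of_swap_mul hne fun π => ?_
    have hcomp : s ∘ ⇑(Equiv.swap u₁ u₂ * π) = s ∘ π :=
      funext fun u => Equiv.apply_swap_eq_self hs₁₂ (π u)
    rw [hcomp]
end

section
/- The graph parameter f(G) = (-1)^{|E(G)|} is the partition function of a 1-color vertex model over the complex numbers, namely y : N → C with y_n = i^n (i the imaginary unit), but there is no vertex model y : N^k → R over the reals (for any k) whose partition function equals f. -/
namespace MGraph

variable (G : MGraph)

def degree (v : G.V) : ℕ := ∑ e : G.E, G.inc v e

theorem sum_inc (e : G.E) : ∑ v : G.V, G.inc v e = 2 := by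
  simp [inc, Finset.sum_add_distrib]

theorem sum_degree : ∑ v : G.V, G.degree v = 2 * Fintype.card G.E := by
  simp only [degree]
  rw [Finset.sum_comm]
  simp [sum_inc, mul_comm]

theorem degVec_fin_one (κ : G.E → Fin 1) (v : G.V) : G.degVec κ v 0 = G.degree v := by
  simp [degVec, degree, Subsingleton.elim _ (0 : Fin 1)]

theorem pf_fin_one {F : Type} [CommRing F] (y : ℕ → F) :
    pf 1 (fun n => y (n 0)) G = ∏ v : G.V, y (G.degree v) := by
  simp [pf, degVec_fin_one]

theorem pf_fin_one_pow {F : Type} [CommRing F] (a : F) :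
    pf 1 (fun n => a ^ n 0) G = (a ^ 2) ^ Fintype.card G.E := by
  rw [pf_fin_one, Finset.prod_pow_eq_pow_sum, sum_degree, pow_mul]

def edge : MGraph where
  V := Bool
  E := Unit
  ends := fun _ => (false, true)

theorem edge_degVec_false {k : ℕ} (κ : edge.E → Fin k) :
    edge.degVec κ false = edge.degVec κ true := by
  funext c
  simp [degVec, inc, edge]

-- Both endpoints of the edge see the same colour, so every term of the sum is a square.
theorem pf_edge_nonneg {F : Type} [CommRing F] [LinearOrder F] [IsStrictOrderedRing F] (k : ℕ)
    (y : (Fin k → ℕ) → F) : 0 ≤ pf k y edge := by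
  refine Finset.sum_nonneg fun κ _ => ?_
  change 0 ≤ ∏ v : Bool, y (edge.degVec κ v)
  rw [Fintype.prod_bool, edge_degVec_false]
  exact mul_self_nonneg _

end MGraph

/-- `(-1)^{|E(G)|}` is the partition function of the 1-color vertex model
`y_n = i^n` over `ℂ`, but of no vertex model over `ℝ`. -/
theorem neg_one_pow_edges_complex_not_real :
    (∀ G : MGraph, MGraph.pf 1 (fun n => Complex.I ^ n 0) G
        = (-1 : ℂ) ^ Fintype.card G.E) ∧
      ¬ ∃ (k : ℕ) (y : (Fin k → ℕ) → ℝ),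
          ∀ G : MGraph, MGraph.pf k y G = (-1 : ℝ) ^ Fintype.card G.E := by
  refine ⟨fun G => by rw [G.pf_fin_one_pow, Complex.I_sq], ?_⟩
  rintro ⟨k, y, hy⟩
  have h := MGraph.pf_edge_nonneg k y
  rw [hy MGraph.edge, show Fintype.card MGraph.edge.E = 1 from rfl] at h
  norm_num at h
end

section
/- Fix k, n ∈ N and an algebraically closed field F of characteristic 0. Define μ : O(Sym F^{n×n}) → FG_n by μ(Π_{ij∈E} x_{i,j}) = G for each graph G = ([n],E); define τ : O(Sym F^{n×n}) → O(F^{k×n}) by τ(q)(z) = q(z^T z); define σ : O(F^{k×n}) → R_n by σ(Π_{j=1}^n Π_{i=1}^k z_{i,j}^{α(i,j)}) = Π_{j=1}^n y_{α_j}, where α_j is the j-th column of α. Then p ∘ μ = σ ∘ τ, where p(G)(y) = f_y(G). -/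
set_option linter.unusedVariables false

open MvPolynomial

/-- the polynomial ring `R = F[y_α : α ∈ ℕ^k]`. -/
abbrev PolyR (F : Type) [CommRing F] (k : ℕ) : Type := MvPolynomial (Fin k → ℕ) F

/-- the partition function of `G` as a polynomial in the variables `y_α`, i.e.
`p(G)(y) = f_y(G)`. -/
noncomputable def pPoly (F : Type) [CommRing F] (k : ℕ) (G : MGraph) : PolyR F k :=
  ∑ κ : G.E → Fin k, ∏ v : G.V, X (G.degVec κ v)

/-- the linear extension of `p` to formal linear combinations of graphs. -/
noncomputable def pLin (F : Type) [CommRing F] (k : ℕ) : (MGraph →₀ F) →ₗ[F] PolyR F k :=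
  Finsupp.linearCombination F (pPoly F k)

/-- the substitution action of a matrix `g` on `F[x_1,…,x_k]` : `x_i ↦ ∑_j g_{j i} x_j`. -/
noncomputable def substAct {F : Type} [CommRing F] {k : ℕ}
    (g : Matrix (Fin k) (Fin k) F) :
    MvPolynomial (Fin k) F →ₐ[F] MvPolynomial (Fin k) F :=
  aeval (fun i => ∑ j, C (g j i) * X j)

/-- the linear map `F[x_1,…,x_k] → R` sending the monomial `x^α` to the variable `y_α`. -/
noncomputable def monToVar (F : Type) [CommRing F] (k : ℕ)
    (q : MvPolynomial (Fin k) F) : PolyR F k :=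
  ∑ d ∈ q.support, C (q.coeff d) * X (⇑d : Fin k → ℕ)

/-- the action of a matrix `g` on `R = F[y_α]` induced from the substitution action on
`F[x_1,…,x_k]` via the identification `y_α ↔ x^α`. -/
noncomputable def gAct {F : Type} [CommRing F] {k : ℕ}
    (g : Matrix (Fin k) (Fin k) F) : PolyR F k →ₐ[F] PolyR F k :=
  aeval (fun α : Fin k → ℕ => monToVar F k (substAct g (∏ i, X i ^ α i)))

/-- `O_k`-invariance of an element of `R`. -/
def OkInvariant {F : Type} [CommRing F] {k : ℕ} (q : PolyR F k) : Prop :=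
  ∀ g : Matrix (Fin k) (Fin k) F, g.transpose * g = 1 → gAct g q = q

/-- `τ : O(Sym F^{n×n}) → O(F^{k×n})`, `τ(q)(z) = q(zᵀz)` : the algebra map sending the
coordinate `x_{ij}` to `∑_h z_{h,i} z_{h,j}`. -/
noncomputable def tauMap (F : Type) [CommRing F] (k n : ℕ) :
    MvPolynomial (Sym2 (Fin n)) F →ₐ[F] MvPolynomial (Fin k × Fin n) F :=
  aeval (fun s => Sym2.lift
    ⟨fun i j => ∑ h : Fin k, X (h, i) * X (h, j),
      fun i j => Finset.sum_congr rfl (fun h _ => mul_comm _ _)⟩ s)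

/-- the multigraph on vertex set `[n]` whose edge multiset is given by the exponent
vector `d` of a monomial in the variables `x_{ij}`. -/
noncomputable def graphOf (n : ℕ) (d : Sym2 (Fin n) →₀ ℕ) : MGraph where
  V := Fin n
  E := (s : Sym2 (Fin n)) × Fin (d s)
  ends := fun e => (Quot.out e.1 : Fin n × Fin n)

/-- `μ : O(Sym F^{n×n}) → FG_n`, sending the monomial `∏_{ij ∈ E} x_{ij}` to the graph
`([n], E)` (with multiplicities). -/
noncomputable def muMap (F : Type) [CommRing F] (n : ℕ) :
    MvPolynomial (Sym2 (Fin n)) F →ₗ[F] (MGraph →₀ F) :=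
  (MvPolynomial.basisMonomials (Sym2 (Fin n)) F).constr F
    (fun d => Finsupp.single (graphOf n d) (1 : F))

/-- `σ : O(F^{k×n}) → R`, sending the monomial with exponent matrix `α` to
`∏_{j=1}^n y_{α_j}` (`α_j` the `j`-th column of `α`). -/
noncomputable def sigmaMap (F : Type) [CommRing F] (k n : ℕ) :
    MvPolynomial (Fin k × Fin n) F →ₗ[F] PolyR F k :=
  (MvPolynomial.basisMonomials (Fin k × Fin n) F).constr F
    (fun β => ∏ j : Fin n, X (fun i => β (i, j)))

/-! Both sides are linear, so it suffices to compare them on a monomial `∏_{e ∈ E} x_e`.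
Expanding `τ` turns it into a sum over colourings `κ : E → [k]` of monomials in the `z_{h,j}`
whose `j`-th column counts, colour by colour, the edge ends at vertex `j`; `σ` sends such a
monomial to `∏_v y_{κ(δ(v))}`, the `κ`-summand of the partition function `p(G)`. -/

theorem MvPolynomial.monomial_one_eq_prod_X_sigma {R σ : Type*} [CommRing R] [Fintype σ]
    (d : σ →₀ ℕ) :
    monomial d (1 : R) = ∏ e : (s : σ) × Fin (d s), X e.1 := by
  rw [monomial_eq, map_one, one_mul, Finsupp.prod_fintype _ _ fun s => pow_zero _,
    ← Finset.univ_sigma_univ, Finset.prod_sigma]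
  simp

section

variable (F : Type) [CommRing F] (k n : ℕ)

theorem muMap_monomial_one (d : Sym2 (Fin n) →₀ ℕ) :
    muMap F n (monomial d 1) = Finsupp.single (graphOf n d) 1 := by
  unfold muMap
  simpa [coe_basisMonomials] using (basisMonomials (Sym2 (Fin n)) F).constr_basis F _ d

theorem pLin_single_one (G : MGraph) :
    pLin F k (Finsupp.single G 1) = pPoly F k G := by
  simp [pLin]

theorem sigmaMap_monomial_one (β : Fin k × Fin n →₀ ℕ) :
    sigmaMap F k n (monomial β 1) = ∏ j : Fin n, X fun i => β (i, j) := by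
  unfold sigmaMap
  simpa [coe_basisMonomials] using (basisMonomials (Fin k × Fin n) F).constr_basis F _ β

theorem tauMap_X (s : Sym2 (Fin n)) :
    tauMap F k n (X s) = ∑ h : Fin k, X (h, s.out.1) * X (h, s.out.2) := by
  conv_lhs => rw [← Quot.out_eq s]
  rw [tauMap, aeval_X]
  exact Sym2.lift_mk _ _ _

theorem tauMap_monomial_one (d : Sym2 (Fin n) →₀ ℕ) :
    tauMap F k n (monomial d 1) = ∑ κ : (graphOf n d).E → Fin k,
      ∏ e, X (κ e, ((graphOf n d).ends e).1) * X (κ e, ((graphOf n d).ends e).2) := by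
  rw [monomial_one_eq_prod_X_sigma, map_prod]
  simp only [tauMap_X]
  rw [Finset.prod_univ_sum, Fintype.piFinset_univ]
  rfl

theorem sigmaMap_prod_X_mul_X {ι : Type*} [Fintype ι]
    (c : ι → Fin k) (a b : ι → Fin n) :
    sigmaMap F k n (∏ e, X (c e, a e) * X (c e, b e)) =
      ∏ j, X fun i => ∑ e, if c e = i then
        (if a e = j then 1 else 0) + (if b e = j then 1 else 0) else 0 := by
  have hmon : ∏ e, X (R := F) (c e, a e) * X (c e, b e) =
      monomial (∑ e, (Finsupp.single (c e, a e) 1 + Finsupp.single (c e, b e) 1)) 1 := by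
    rw [monomial_sum_one]
    exact Finset.prod_congr rfl fun e _ => by rw [X, X, monomial_mul, one_mul]
  rw [hmon, sigmaMap_monomial_one]
  refine Finset.prod_congr rfl fun j _ => congrArg X (funext fun i => ?_)
  simp only [Finsupp.finsetSum_apply, Finsupp.add_apply, Finsupp.single_apply,
    Prod.mk.injEq]
  refine Finset.sum_congr rfl fun e _ => ?_
  by_cases hc : c e = i <;> simp [hc, eq_comm]

end

theorem pLin_comp_muMap_eq_sigmaMap_comp_tauMap_general
    (F : Type) [Field F] (k n : ℕ) :
    (pLin F k).comp (muMap F n) =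
      (sigmaMap F k n).comp (tauMap F k n).toLinearMap := by
  refine (basisMonomials (Sym2 (Fin n)) F).ext fun d => ?_
  simp only [LinearMap.comp_apply, coe_basisMonomials, AlgHom.toLinearMap_apply,
    muMap_monomial_one, pLin_single_one, tauMap_monomial_one, map_sum]
  exact Finset.sum_congr rfl fun κ _ => (sigmaMap_prod_X_mul_X F k n κ _ _).symm

/-- the diagram commutes: `p ∘ μ = σ ∘ τ`. -/
theorem pLin_comp_muMap_eq_sigmaMap_comp_tauMap
    (F : Type) [Field F] [IsAlgClosed F] [CharZero F] (k n : ℕ) :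
    (pLin F k).comp (muMap F n) =
      (sigmaMap F k n).comp (tauMap F k n).toLinearMap :=
  pLin_comp_muMap_eq_sigmaMap_comp_tauMap_general F k n
end

section
/- The graph parameter f(G) := 2^{(number of loops of G)} is multiplicative and satisfies, for k = 1, the condition Σ_{π∈S_U} sgn(π) f(G_{s∘π}) = 0 for all graphs G = (V,E), all U ⊆ V with |U| = 2, and all s : U → V with s(U) ∩ U = ∅; yet f is not the partition function of any 1-color vertex model over C. -/
/-!
The edges added to `G` join each `u ∈ U` to `s(π u) ∉ U`, so none of them is a loop and
`f(G_{s∘π}) = f(G)` for every `π`; the signed sum is then `f(G)` times `∑ π, sign π = 0`.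
A 1-color model `y` would have to satisfy `y₂ = f(loop) = 2` and `y₂² = f(digon) = 1`.
-/

theorem Equiv.Perm.sum_sign_eq_zero {α : Type*} [Fintype α] [DecidableEq α] [Nontrivial α] :
    ∑ π : Equiv.Perm α, (Equiv.Perm.sign π : ℤ) = 0 := by
  refine sum_hom_units_eq_zero ((Units.coeHom ℤ).comp Equiv.Perm.sign) fun h => ?_
  obtain ⟨a, b, hab⟩ := exists_pair_ne α
  have := DFunLike.congr_fun h (Equiv.swap a b)
  simp [Equiv.Perm.sign_swap hab] at this

namespace MGraph

def numLoops (G : MGraph) : ℕ :=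
  Fintype.card {e : G.E // (G.ends e).1 = (G.ends e).2}

theorem numLoops_empty : empty.numLoops = 0 :=
  Fintype.card_eq_zero_iff.mpr ⟨fun e => Empty.elim e.1⟩

theorem numLoops_disjUnion (G H : MGraph) :
    (G.disjUnion H).numLoops = G.numLoops + H.numLoops := by
  rw [numLoops, numLoops, numLoops, ← Fintype.card_sum]
  refine Fintype.card_congr <| Equiv.subtypeSum.trans <|
    Equiv.sumCongr (Equiv.subtypeEquivRight fun e => ?_) (Equiv.subtypeEquivRight fun e => ?_) <;>
    simp [disjUnion]

theorem numLoops_addEdges (G : MGraph) (U : Finset G.V) (t : {v // v ∈ U} → G.V)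
    (ht : ∀ u, u.1 ≠ t u) : (G.addEdges U t).numLoops = G.numLoops := by
  have : IsEmpty {u : {v // v ∈ U} // False} := ⟨fun u => u.2⟩
  refine Fintype.card_congr <| (Equiv.subtypeSum.trans <| Equiv.sumCongr
    (Equiv.subtypeEquivRight fun e => ?_) (Equiv.subtypeEquivRight (q := fun _ => False)
      fun u => ?_)).trans (Equiv.sumEmpty _ _)
  · simp [addEdges]
  · simpa [addEdges] using ht u

theorem pf_one_color {F : Type} [CommRing F] (y : (Fin 1 → ℕ) → F) (G : MGraph) :
    pf 1 y G = ∏ v : G.V, y (G.degVec (default : G.E → Fin 1) v) :=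
  Fintype.sum_unique _

theorem pf_one_color_of_regular {F : Type} [CommRing F] (y : (Fin 1 → ℕ) → F) (G : MGraph)
    (d : ℕ) (hG : ∀ v, G.degVec (default : G.E → Fin 1) v = fun _ => d) :
    pf 1 y G = y (fun _ => d) ^ Fintype.card G.V := by
  simp only [pf_one_color, hG, Finset.prod_const, Finset.card_univ]

def loop : MGraph := { V := Unit, E := Unit, ends := fun _ => ((), ()) }

def digon : MGraph := { V := Bool, E := Bool, ends := fun _ => (false, true) }

theorem numLoops_loop : loop.numLoops = 1 := by decide

theorem numLoops_digon : digon.numLoops = 0 := by decide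

theorem pf_one_color_loop {F : Type} [CommRing F] (y : (Fin 1 → ℕ) → F) :
    pf 1 y loop = y (fun _ => 2) := by
  rw [pf_one_color_of_regular y loop 2 fun v => funext fun c => by decide +revert]
  exact pow_one _

theorem pf_one_color_digon {F : Type} [CommRing F] (y : (Fin 1 → ℕ) → F) :
    pf 1 y digon = y (fun _ => 2) ^ 2 :=
  pf_one_color_of_regular y digon 2 fun v => funext fun c => by decide +revert

end MGraph

/-- `f(G) = 2^{#loops}` is multiplicative and satisfies the `k = 1`
signed edge-addition condition for maps `s` with `s(U) ∩ U = ∅`, yet is not the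
partition function of any 1-color vertex model over `ℂ`. -/
theorem two_pow_loops_counterexample :
    letI f : MGraph → ℂ :=
      fun G => 2 ^ (Fintype.card {e : G.E // (G.ends e).1 = (G.ends e).2})
    (f MGraph.empty = 1 ∧ ∀ G H : MGraph, f (G.disjUnion H) = f G * f H) ∧
    (∀ (G : MGraph) (U : Finset G.V), U.card = 2 →
      ∀ s : {v // v ∈ U} → G.V, (∀ u, s u ∉ U) →
        ∑ π : Equiv.Perm {v // v ∈ U},
          ((Equiv.Perm.sign π : ℤ) : ℂ) * f (G.addEdges U (s ∘ π)) = 0) ∧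
    ¬ ∃ y : (Fin 1 → ℕ) → ℂ, ∀ G : MGraph, f G = MGraph.pf 1 y G := by
  simp only [← MGraph.numLoops.eq_1]
  refine ⟨⟨by rw [MGraph.numLoops_empty, pow_zero], fun G H => by
    rw [MGraph.numLoops_disjUnion, pow_add]⟩, fun G U hU s hs => ?_, ?_⟩
  · have : Nontrivial {v // v ∈ U} := Fintype.one_lt_card_iff_nontrivial.mp (by simp [hU])
    have hloops (π : Equiv.Perm {v // v ∈ U}) : (G.addEdges U (s ∘ π)).numLoops = G.numLoops :=
      MGraph.numLoops_addEdges G U _ fun u h => hs (π u) (h ▸ u.2 : (s ∘ π) u ∈ U)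
    have hsign : ∑ π : Equiv.Perm {v // v ∈ U}, ((Equiv.Perm.sign π : ℤ) : ℂ) = 0 := by
      exact_mod_cast Equiv.Perm.sum_sign_eq_zero
    simp only [hloops, ← Finset.sum_mul, hsign, zero_mul]
  · rintro ⟨y, hy⟩
    have hloop : 2 = y (fun _ => 2) := by
      simpa [MGraph.numLoops_loop, MGraph.pf_one_color_loop] using hy MGraph.loop
    have hdigon : 1 = y (fun _ => 2) ^ 2 := by
      simpa [MGraph.numLoops_digon, MGraph.pf_one_color_digon] using hy MGraph.digon
    norm_num [← hloop] at hdigon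
end

section
/- The graph parameter f(G) := 2^{|V(G)|} is the partition function of the 1-color vertex model y : N → C with y_n = 2 for all n, whose moment matrix has rank 1; yet there exist a graph G = (V,E), a set U ⊆ V with |U| = 2, and a map s : U → V with s(U) ∩ U ≠ ∅ such that Σ_{π∈S_U} sgn(π) f(G/(s∘π)) ≠ 0. -/
/-! Contracting the added edge `u t(u)` merges two vertices exactly when `t u ≠ u`. On the
edgeless graph with vertex set `U = {a, b}` and `s = id`, the identity permutation therefore
contributes `2 ^ 2` while the transposition contributes `-2 ^ k` with `k < 2`. -/

namespace MGraph

def edgeless (V : Type) [Fintype V] [DecidableEq V] : MGraph where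
  V := V
  E := Empty
  ends := Empty.elim

theorem pf_const {F : Type} [CommRing F] (k : ℕ) (c : F) (G : MGraph) :
    pf k (fun _ => c) G = (k : F) ^ Fintype.card G.E * c ^ Fintype.card G.V := by
  simp [pf, Finset.prod_const, Finset.card_univ]

variable {G : MGraph} {U : Finset G.V} {t : {v // v ∈ U} → G.V}

theorem card_contract_of_forall_eq (h : ∀ u, t u = u.1) :
    Fintype.card (G.contract U t).V = Fintype.card G.V := by
  refine (Fintype.card_of_bijective (β := (G.contract U t).V) (f := Quotient.mk _)
    ⟨fun a b hab => ?_, Quotient.mk_surjective⟩).symm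
  exact eq_equivalence.eqvGen_iff.1 <| Relation.EqvGen.mono
    (fun a b ⟨ha, hab⟩ => (h ⟨a, ha⟩).symm.trans hab) _ _ (Quotient.exact hab)

theorem card_contract_lt_of_exists_ne (h : ∃ u, t u ≠ u.1) :
    Fintype.card (G.contract U t).V < Fintype.card G.V := by
  obtain ⟨u, hu⟩ := h
  refine Fintype.card_lt_of_surjective_not_injective (Quotient.mk _ : G.V → (G.contract U t).V)
    Quotient.mk_surjective fun hinj => hu (hinj ?_).symm
  exact Quotient.sound (Relation.EqvGen.rel _ _ ⟨u.2, rfl⟩)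

end MGraph

theorem Equiv.Perm.sum_sign_mul_of_forall_eq_or_eq {α R : Type*} [Fintype α] [DecidableEq α]
    [CommRing R] {a b : α} (hab : a ≠ b) (hα : ∀ x, x = a ∨ x = b) (g : Perm α → R) :
    ∑ π : Perm α, (sign π : R) * g π = g 1 - g (swap a b) := by
  have huniv : (Finset.univ : Finset (Perm α)) = {1, swap a b} := by
    ext π
    simp only [Finset.mem_univ, Finset.mem_insert, Finset.mem_singleton, true_iff]
    rcases hα (π a) with ha | ha <;> rcases hα (π b) with hb | hb
    · exact absurd (π.injective (ha.trans hb.symm)) hab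
    · left; ext x; rcases hα x with rfl | rfl <;> assumption
    · right; ext x; rcases hα x with rfl | rfl <;> simp [ha, hb]
    · exact absurd (π.injective (ha.trans hb.symm)) hab
  rw [huniv, Finset.sum_pair (Ne.symm (swap_eq_one_iff.not.2 hab)), sign_one, sign_swap hab]
  push_cast
  ring

/-- `f(G) = 2^{|V(G)|}` is the partition function of the constant
1-color vertex model `y ≡ 2`, whose moment matrix has rank at most 1 (all `2 × 2`
minors vanish); yet the signed contraction condition fails for some `s` with
`s(U) ∩ U ≠ ∅`. -/
theorem two_pow_vertices_counterexample :
    letI f : MGraph → ℂ := fun G => 2 ^ (Fintype.card G.V)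
    letI y : (Fin 1 → ℕ) → ℂ := fun _ => 2
    (∀ G : MGraph, f G = MGraph.pf 1 y G) ∧
    (∀ α β : Fin 2 → (Fin 1 → ℕ), (Matrix.of fun i j => y (α i + β j)).det = 0) ∧
    ∃ (G : MGraph) (U : Finset G.V) (s : {v // v ∈ U} → G.V),
      U.card = 2 ∧ (∃ u, s u ∈ U) ∧
      ∑ π : Equiv.Perm {v // v ∈ U},
        ((Equiv.Perm.sign π : ℤ) : ℂ) * f (G.contract U (s ∘ π)) ≠ 0 := by
  refine ⟨fun G => by simp [MGraph.pf_const], fun α β => by simp [Matrix.det_fin_two],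
    MGraph.edgeless Bool, Finset.univ, Subtype.val, rfl,
    ⟨⟨true, Finset.mem_univ _⟩, Finset.mem_univ _⟩, ?_⟩
  set a : {v // v ∈ (Finset.univ : Finset (MGraph.edgeless Bool).V)} :=
    ⟨false, Finset.mem_univ _⟩
  set b : {v // v ∈ (Finset.univ : Finset (MGraph.edgeless Bool).V)} :=
    ⟨true, Finset.mem_univ _⟩
  have hab : a ≠ b := Subtype.coe_ne_coe.1 Bool.false_ne_true
  dsimp only
  rw [Equiv.Perm.sum_sign_mul_of_forall_eq_or_eq hab (fun ⟨x, _⟩ => by cases x <;> simp [a, b]),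
    Equiv.Perm.coe_one, Function.comp_id, MGraph.card_contract_of_forall_eq fun _ => rfl,
    sub_ne_zero]
  have hswap := MGraph.card_contract_lt_of_exists_ne (t := Subtype.val ∘ ⇑(Equiv.swap a b))
    ⟨a, by rw [Function.comp_apply, Equiv.swap_apply_left]; exact Subtype.coe_ne_coe.2 hab.symm⟩
  exact_mod_cast (Nat.pow_lt_pow_right one_lt_two hswap).ne'
end

section
/- Let y : N^k → C be a vertex model whose moment matrix M_y = (y_{α+β})_{α,β∈N^k} has rank at most r. Then for every l ∈ N, the connection matrix C_{f_y,l} = (f_y(GH))_{G,H ∈ G_l} has rank at most r^l. -/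
/-- an `l`-labeled multigraph. -/
structure LGraph (l : ℕ) : Type 1 where
  G : MGraph
  lab : Fin l → G.V
  inj : Function.Injective lab

/-- glue two `l`-labeled graphs by identifying equally labeled vertices. -/
noncomputable def LGraph.glue {l : ℕ} (G H : LGraph l) : MGraph :=
  letI s : Setoid (G.G.V ⊕ H.G.V) := Relation.EqvGen.setoid
    (fun a b => ∃ i : Fin l, a = Sum.inl (G.lab i) ∧ b = Sum.inr (H.lab i))
  letI : DecidableEq (Quotient s) := Classical.decEq _
  letI : Fintype (Quotient s) := Fintype.ofSurjective (Quotient.mk s)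
    (fun q => Quot.exists_rep q)
  { V := Quotient s
    E := G.G.E ⊕ H.G.E
    ends := Sum.elim
      (fun e => (Quotient.mk s (Sum.inl (G.G.ends e).1), Quotient.mk s (Sum.inl (G.G.ends e).2)))
      (fun e => (Quotient.mk s (Sum.inr (H.G.ends e).1), Quotient.mk s (Sum.inr (H.G.ends e).2))) }


section LinearAlgebra

open Matrix Submodule

theorem Matrix.det_mul_eq_zero_of_card_lt {n ι R : Type*} [Fintype n] [DecidableEq n] [Fintype ι]
    [CommRing R] [IsDomain R] (A : Matrix n ι R) (B : Matrix ι n R)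
    (h : Fintype.card ι < Fintype.card n) : (A * B).det = 0 := by
  by_contra hdet
  have hrank := (A * B).rank_of_det_ne_zero hdet
  have := rank_mul_le_left A B
  have := rank_le_card_width A
  omega

theorem span_range_swap_eq_top_of_linearIndependent {K B : Type*} [Field K] {n : ℕ}
    {v : Fin n → B → K} (hv : LinearIndependent K v) :
    span K (Set.range (Function.swap v)) = ⊤ := by
  by_contra hne
  -- a nonzero functional `f` vanishing on all columns gives the relation `∑ i, f eᵢ • v i = 0`
  obtain ⟨f, hf0, hf⟩ :=
    exists_dual_map_eq_bot_of_lt_top (lt_top_iff_ne_top.2 hne) inferInstance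
  have hc := Fintype.linearIndependent_iff.1 hv (fun i => f (Pi.single i 1)) <| by
    ext b
    have hfv : f (Function.swap v b) = 0 :=
      (mem_bot K).1 (hf ▸ mem_map_of_mem (subset_span ⟨b, rfl⟩))
    rw [Pi.zero_apply, ← hfv, LinearMap.pi_apply_eq_sum_univ f, Finset.sum_apply]
    refine Fintype.sum_congr _ _ fun i => ?_
    rw [Pi.smul_apply, smul_eq_mul, smul_eq_mul, mul_comm]
    congr 2
    ext j
    simp [Pi.single_apply, eq_comm]
  exact hf0 (LinearMap.pi_ext' fun i => LinearMap.ext_ring (hc i))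

theorem exists_det_ne_zero_of_linearIndependent {K B : Type*} [Field K] {n : ℕ}
    {v : Fin n → B → K} (hv : LinearIndependent K v) :
    ∃ b : Fin n → B, (of fun i j => v i (b j)).det ≠ 0 := by
  obtain ⟨κ, a, -, hspan, hind⟩ := exists_linearIndependent' K (Function.swap v)
  let e : Fin n ≃ κ := (Pi.basisFun K (Fin n)).indexEquiv
    (Module.Basis.mk hind (hspan.trans (span_range_swap_eq_top_of_linearIndependent hv)).ge)
  refine ⟨a ∘ e, ?_⟩
  rw [← isUnit_iff_ne_zero, ← isUnit_iff_isUnit_det, ← linearIndependent_cols_iff_isUnit]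
  exact hind.comp e e.injective

theorem exists_sum_mul_eq_of_minors_eq_zero {K A B : Type*} [Field K] {r : ℕ} (M : A → B → K)
    (hM : ∀ (α : Fin (r + 1) → A) (β : Fin (r + 1) → B),
      (of fun i j => M (α i) (β j)).det = 0) :
    ∃ d ≤ r, ∃ (U : A → Fin d → K) (V : B → Fin d → K), ∀ a b, M a b = ∑ t, U a t * V b t := by
  have hdep (α : Fin (r + 1) → A) : ¬ LinearIndependent K (M ∘ α) := fun hα =>
    let ⟨β, hβ⟩ := exists_det_ne_zero_of_linearIndependent hα
    hβ (hM α β)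
  obtain ⟨κ, a, -, hspan, hind⟩ := exists_linearIndependent' K M
  have : Finite κ := by
    by_contra hinf
    have := not_finite_iff_infinite.1 hinf
    let f : Fin (r + 1) ↪ κ := Fin.valEmbedding.trans (Infinite.natEmbedding κ)
    exact hdep (a ∘ f) (hind.comp f f.injective)
  have hcard : Nat.card κ ≤ r := by
    by_contra! hlt
    let f := (Fin.castLEEmb hlt).trans (Finite.equivFin κ).symm.toEmbedding
    exact hdep (a ∘ f) (hind.comp f f.injective)
  let basis := ((Module.Basis.span hind).reindex (Finite.equivFin κ)).map
    (LinearEquiv.ofEq _ _ hspan)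
  refine ⟨_, hcard, fun a t => basis.repr ⟨M a, subset_span ⟨a, rfl⟩⟩ t,
    fun b t => (basis t : B → K) b, fun a b => ?_⟩
  have h := congrFun (congrArg Subtype.val (basis.sum_repr ⟨M a, subset_span ⟨a, rfl⟩⟩)) b
  simp only [coe_sum, coe_smul, Finset.sum_apply, Pi.smul_apply, smul_eq_mul] at h
  exact h.symm

end LinearAlgebra

namespace MGraph

variable {k : ℕ}

theorem degVec_eq_sum_fiber {G G' : MGraph} (π : G.V → G'.V) (ε : G'.E ≃ G.E)
    (hends : ∀ e, G'.ends e = Prod.map π π (G.ends (ε e))) (κ : G.E → Fin k) (q : G'.V) :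
    G'.degVec (κ ∘ ε) q = ∑ x with π x = q, G.degVec κ x := by
  have hinc (e : G'.E) : G'.inc q e = ∑ x with π x = q, G.inc x (ε e) := by
    simp [inc, hends, Finset.sum_add_distrib]
  funext c
  simp only [degVec, Finset.sum_apply, hinc]
  rw [Finset.sum_comm, ← ε.symm.sum_comp]
  simp [Finset.sum_ite_irrel]

variable (G H : MGraph) (κG : G.E → Fin k) (κH : H.E → Fin k)

theorem degVec_disjUnion_inl (v : G.V) :
    (G.disjUnion H).degVec (Sum.elim κG κH) (Sum.inl v) = G.degVec κG v := by
  funext c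
  exact (Fintype.sum_sum_type _).trans (by simp [degVec, inc, disjUnion])

theorem degVec_disjUnion_inr (w : H.V) :
    (G.disjUnion H).degVec (Sum.elim κG κH) (Sum.inr w) = H.degVec κH w := by
  funext c
  exact (Fintype.sum_sum_type _).trans (by simp [degVec, inc, disjUnion])

end MGraph

namespace LGraph

variable {l : ℕ}

abbrev unlabeled (G : LGraph l) : Set G.G.V := (Set.range G.lab)ᶜ

noncomputable def vertexEquiv (G : LGraph l) : G.G.V ≃ Fin l ⊕ G.unlabeled :=
  (Equiv.Set.sumCompl (Set.range G.lab)).symm.trans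
    (Equiv.sumCongr (Equiv.ofInjective _ G.inj).symm (Equiv.refl _))

@[simp]
theorem vertexEquiv_lab (G : LGraph l) (t : Fin l) : G.vertexEquiv (G.lab t) = Sum.inl t := by
  simp [vertexEquiv, Equiv.Set.sumCompl_symm_apply_of_mem]

@[simp]
theorem vertexEquiv_coe (G : LGraph l) (u : G.unlabeled) : G.vertexEquiv u = Sum.inr u := by
  simp [vertexEquiv, Equiv.Set.sumCompl_symm_apply_compl]

@[simp]
theorem vertexEquiv_symm_inl (G : LGraph l) (t : Fin l) :
    G.vertexEquiv.symm (Sum.inl t) = G.lab t := by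
  simp [vertexEquiv]

@[simp]
theorem vertexEquiv_symm_inr (G : LGraph l) (u : G.unlabeled) :
    G.vertexEquiv.symm (Sum.inr u) = u := by
  simp [vertexEquiv]

theorem sum_vertices {M : Type*} [AddCommMonoid M] (G : LGraph l) (f : G.G.V → M) :
    ∑ v, f v = ∑ t, f (G.lab t) + ∑ u : G.unlabeled, f u := by
  rw [← G.vertexEquiv.symm.sum_comp, Fintype.sum_sum_type]
  simp

variable (G H : LGraph l)

def glueMk : G.G.V ⊕ H.G.V → (G.glue H).V := Quotient.mk _

theorem glueMk_surjective : Function.Surjective (glueMk G H) := Quotient.mk_surjective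

noncomputable def glueProj : G.G.V ⊕ H.G.V → Fin l ⊕ (G.unlabeled ⊕ H.unlabeled) :=
  Sum.elim (Sum.map id Sum.inl ∘ G.vertexEquiv) (Sum.map id Sum.inr ∘ H.vertexEquiv)

noncomputable def glueLift : (G.glue H).V → Fin l ⊕ (G.unlabeled ⊕ H.unlabeled) :=
  Quotient.lift (glueProj G H) fun _ _ h => Setoid.eqvGen_le (s := Setoid.ker (glueProj G H))
    (by rintro _ _ ⟨t, rfl, rfl⟩; simp [Setoid.ker_def, glueProj]) h

@[simp]
theorem glueLift_glueMk (x : G.G.V ⊕ H.G.V) : glueLift G H (glueMk G H x) = glueProj G H x :=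
  rfl

noncomputable def glueVertexEquiv : (G.glue H).V ≃ Fin l ⊕ (G.unlabeled ⊕ H.unlabeled) where
  toFun := glueLift G H
  invFun := Sum.elim (fun t => glueMk G H (Sum.inl (G.lab t)))
    (Sum.elim (fun u => glueMk G H (Sum.inl u)) (fun w => glueMk G H (Sum.inr w)))
  left_inv q := by
    obtain ⟨v | w, rfl⟩ := glueMk_surjective G H q
    · obtain ⟨t | u, rfl⟩ := G.vertexEquiv.symm.surjective v <;> simp [glueProj]
    · obtain ⟨t | u, rfl⟩ := H.vertexEquiv.symm.surjective w <;> simp [glueProj]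
      exact Quotient.sound (Relation.EqvGen.rel _ _ ⟨t, rfl, rfl⟩)
  right_inv := by
    rintro (t | u | w) <;> simp [glueProj]

variable {k : ℕ} (κG : G.G.E → Fin k) (κH : H.G.E → Fin k)

theorem degVec_glue (z : Fin l ⊕ (G.unlabeled ⊕ H.unlabeled)) :
    (G.glue H).degVec (Sum.elim κG κH) ((glueVertexEquiv G H).symm z) =
      ∑ x with glueProj G H x = z, Sum.elim (G.G.degVec κG) (H.G.degVec κH) x := by
  refine (MGraph.degVec_eq_sum_fiber (G := G.G.disjUnion H.G) (glueMk G H) (Equiv.refl _)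
    (by rintro (e | e) <;> rfl) _ _).trans ?_
  simp only [Equiv.eq_symm_apply]
  refine Finset.sum_congr rfl ?_
  rintro (v | w) -
  exacts [MGraph.degVec_disjUnion_inl _ _ _ _ v, MGraph.degVec_disjUnion_inr _ _ _ _ w]

theorem prod_degVec_glue {M : Type*} [CommMonoid M] (f : (Fin k → ℕ) → M) :
    ∏ q, f ((G.glue H).degVec (Sum.elim κG κH) q) =
      (∏ t, f (G.G.degVec κG (G.lab t) + H.G.degVec κH (H.lab t))) *
        ((∏ u : G.unlabeled, f (G.G.degVec κG u)) * ∏ w : H.unlabeled, f (H.G.degVec κH w)) := by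
  rw [← (glueVertexEquiv G H).symm.prod_comp, Fintype.prod_sum_type, Fintype.prod_sum_type]
  simp only [degVec_glue, Finset.sum_filter, Fintype.sum_sum_type, sum_vertices]
  simp [glueProj]

variable {F : Type} [CommRing F] {ι : Type*}

theorem pf_glue (y : (Fin k → ℕ) → F) :
    MGraph.pf k y (G.glue H) = ∑ κG : G.G.E → Fin k, ∑ κH : H.G.E → Fin k,
      (∏ t, y (G.G.degVec κG (G.lab t) + H.G.degVec κH (H.lab t))) *
        ((∏ u : G.unlabeled, y (G.G.degVec κG u)) * ∏ w : H.unlabeled, y (H.G.degVec κH w)) := by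
  rw [MGraph.pf, ← Fintype.sum_prod_type']
  exact (Fintype.sum_equiv (Equiv.sumArrowEquivProdArrow G.G.E H.G.E (Fin k)).symm _
    (fun κ : (G.glue H).E → Fin k => ∏ q, y ((G.glue H).degVec κ q))
    fun κ => (prod_degVec_glue G H κ.1 κ.2 y).symm).symm

/-- `c t` picks for the labeled vertex `t` a coordinate of the row space of the moment matrix;
`t` is weighted by `U · (c t)` instead of by `y`. -/
def boundaryPf (y : (Fin k → ℕ) → F) (U : (Fin k → ℕ) → ι → F) (c : Fin l → ι) : F :=
  ∑ κ : G.G.E → Fin k,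
    (∏ t, U (G.G.degVec κ (G.lab t)) (c t)) * ∏ u : G.unlabeled, y (G.G.degVec κ u)

theorem pf_glue_eq_sum_boundaryPf [Fintype ι] [DecidableEq ι] {y : (Fin k → ℕ) → F}
    {U V : (Fin k → ℕ) → ι → F} (hy : ∀ a b, y (a + b) = ∑ i, U a i * V b i) :
    MGraph.pf k y (G.glue H) = ∑ c : Fin l → ι, G.boundaryPf y U c * H.boundaryPf y V c := by
  simp only [pf_glue, hy, Fintype.prod_sum, Finset.prod_mul_distrib, boundaryPf, Finset.sum_mul,
    Finset.mul_sum]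
  rw [Finset.sum_comm]
  refine (Fintype.sum_congr _ _ fun κH => Finset.sum_comm).trans (Finset.sum_comm.trans ?_)
  refine Fintype.sum_congr _ _ fun c =>
    Fintype.sum_congr _ _ fun κH => Fintype.sum_congr _ _ fun κG => ?_
  ring

end LGraph

/-- if the moment matrix of `y` has rank at most `r` (all
`(r+1) × (r+1)` minors vanish), then the `l`-th connection matrix of `f_y` has rank
at most `r^l` (all `(r^l + 1) × (r^l + 1)` minors vanish). -/
theorem connection_matrix_rank_le (k r l : ℕ) (y : (Fin k → ℕ) → ℂ)
    (hrank : ∀ α β : Fin (r + 1) → (Fin k → ℕ),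
      (Matrix.of fun i j => y (α i + β j)).det = 0)
    (Gs Hs : Fin (r ^ l + 1) → LGraph l) :
    (Matrix.of fun i j => MGraph.pf k y ((Gs i).glue (Hs j))).det = 0 := by
  obtain ⟨d, hd, U, V, hUV⟩ := exists_sum_mul_eq_of_minors_eq_zero (fun a b => y (a + b)) hrank
  have hfactor : (Matrix.of fun i j => MGraph.pf k y ((Gs i).glue (Hs j))) =
      (Matrix.of fun i c => (Gs i).boundaryPf y U c) *
        (Matrix.of fun j c => (Hs j).boundaryPf y V c).transpose := by
    ext i j
    simp [LGraph.pf_glue_eq_sum_boundaryPf _ _ hUV, Matrix.mul_apply]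
  rw [hfactor]
  refine Matrix.det_mul_eq_zero_of_card_lt _ _ ?_
  simp only [Fintype.card_fun, Fintype.card_fin]
  exact Nat.lt_succ_of_le (Nat.pow_le_pow_left hd l)
end

section
/- (Directed-graph necessity.) Let F be a commutative ring, k ∈ N, and y : N^{2k} → F. Define the directed partition function f_y(G) = Σ_{κ:E→[k]} Π_{v∈V} y_{κ(δ^-(v)),κ(δ^+(v))} for a finite directed multigraph G = (V,E). Then f_y is multiplicative, and for every directed graph G = (V,E), every U ⊆ V with |U| = k+1, and every s : U → V, Σ_{π∈S_U} sgn(π) f_y(G_{s∘π}) = 0, where G_t adds the arcs {(u, t(u)) : u ∈ U}. -/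
namespace MGraph

/-- number of arcs entering `v` (second coordinate `v`) of color `c`. -/
def inDegVec (G : MGraph) {k : ℕ} (κ : G.E → Fin k) (v : G.V) : Fin k → ℕ :=
  fun c => ∑ e : G.E, if κ e = c ∧ (G.ends e).2 = v then 1 else 0

/-- number of arcs leaving `v` (first coordinate `v`) of color `c`. -/
def outDegVec (G : MGraph) {k : ℕ} (κ : G.E → Fin k) (v : G.V) : Fin k → ℕ :=
  fun c => ∑ e : G.E, if κ e = c ∧ (G.ends e).1 = v then 1 else 0

/-- the directed partition function of a `2k`-color vertex model `y : ℕ^{2k} → F`,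
where `ℕ^{2k}` is encoded as `(Fin k ⊕ Fin k) → ℕ`, the first block recording the colors
of entering arcs and the second block the colors of leaving arcs. -/
def dpf {F : Type} [CommRing F] (k : ℕ) (y : ((Fin k ⊕ Fin k) → ℕ) → F) (G : MGraph) : F :=
  ∑ κ : G.E → Fin k, ∏ v : G.V, y (Sum.elim (G.inDegVec κ v) (G.outDegVec κ v))

end MGraph

/-!
Multiplicativity holds because a colouring of a disjoint union is a pair of colourings and the
vertex weights factor accordingly. For the signed sum, expand every `dpf` and exchange the sums,
so that it suffices to fix a colouring `κ` of the arcs of `G` together with the `k + 1` added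
arcs. By pigeonhole two added arcs, leaving `a ≠ b`, receive the same colour. Swapping their
heads changes no in- or out-degree vector, so `π` and `π * swap a b` contribute equal weights
with opposite signs.
-/

namespace Equiv.Perm

theorem sum_sign_mul_eq_zero_of_mul_swap_s17 {α R : Type*} [Fintype α] [DecidableEq α] [CommRing R]
    (f : Perm α → R) {a b : α} (hab : a ≠ b) (hf : ∀ σ, f (σ * swap a b) = f σ) :
    ∑ σ, ((sign σ : ℤ) : R) * f σ = 0 := by
  refine Finset.sum_ninvolution (· * swap a b) (fun σ => ?_)
    (fun σ _ => (not_congr mul_swap_eq_iff).mpr hab) (fun _ => Finset.mem_univ _)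
    (mul_swap_involutive a b)
  simp only [hf, map_mul, sign_swap hab, Units.val_mul, Units.val_neg, Units.val_one,
    Int.cast_mul, Int.cast_neg, Int.cast_one]
  ring

end Equiv.Perm

namespace MGraph

variable {F : Type} [CommRing F] {k : ℕ}

theorem dpf_empty (y : ((Fin k ⊕ Fin k) → ℕ) → F) : dpf k y empty = 1 := by
  have : IsEmpty empty.E := ⟨Empty.elim⟩
  have : IsEmpty empty.V := ⟨Empty.elim⟩
  simp [dpf]

section DisjUnion

variable (G H : MGraph) (κ₁ : G.E → Fin k) (κ₂ : H.E → Fin k)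

theorem inDegVec_disjUnion_inl (v : G.V) :
    (G.disjUnion H).inDegVec (Sum.elim κ₁ κ₂) (.inl v) = G.inDegVec κ₁ v := by
  funext c
  change ∑ e : G.E ⊕ H.E, _ = _
  simp [Fintype.sum_sum_type, inDegVec, disjUnion]

theorem outDegVec_disjUnion_inl (v : G.V) :
    (G.disjUnion H).outDegVec (Sum.elim κ₁ κ₂) (.inl v) = G.outDegVec κ₁ v := by
  funext c
  change ∑ e : G.E ⊕ H.E, _ = _
  simp [Fintype.sum_sum_type, outDegVec, disjUnion]

theorem inDegVec_disjUnion_inr (v : H.V) :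
    (G.disjUnion H).inDegVec (Sum.elim κ₁ κ₂) (.inr v) = H.inDegVec κ₂ v := by
  funext c
  change ∑ e : G.E ⊕ H.E, _ = _
  simp [Fintype.sum_sum_type, inDegVec, disjUnion]

theorem outDegVec_disjUnion_inr (v : H.V) :
    (G.disjUnion H).outDegVec (Sum.elim κ₁ κ₂) (.inr v) = H.outDegVec κ₂ v := by
  funext c
  change ∑ e : G.E ⊕ H.E, _ = _
  simp [Fintype.sum_sum_type, outDegVec, disjUnion]

end DisjUnion

theorem dpf_disjUnion (y : ((Fin k ⊕ Fin k) → ℕ) → F) (G H : MGraph) :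
    dpf k y (G.disjUnion H) = dpf k y G * dpf k y H := by
  change ∑ κ : G.E ⊕ H.E → Fin k, _ = _
  rw [← (Equiv.sumArrowEquivProdArrow G.E H.E (Fin k)).symm.sum_comp,
    Fintype.sum_prod_type, dpf, dpf, Fintype.sum_mul_sum]
  refine Fintype.sum_congr _ _ fun κ₁ => Fintype.sum_congr _ _ fun κ₂ => ?_
  change ∏ v : G.V ⊕ H.V, y (Sum.elim ((G.disjUnion H).inDegVec (Sum.elim κ₁ κ₂) v)
    ((G.disjUnion H).outDegVec (Sum.elim κ₁ κ₂) v)) = _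
  rw [Fintype.prod_sum_type]
  simp only [inDegVec_disjUnion_inl, outDegVec_disjUnion_inl, inDegVec_disjUnion_inr,
    outDegVec_disjUnion_inr]

section AddEdges

variable (G : MGraph) (U : Finset G.V) (κ : G.E ⊕ {v // v ∈ U} → Fin k)

theorem inDegVec_addEdges_comp_perm (t : {v // v ∈ U} → G.V) (τ : Equiv.Perm {v // v ∈ U})
    (hτ : ∀ u, κ (.inr (τ u)) = κ (.inr u)) :
    (G.addEdges U (t ∘ τ)).inDegVec κ = (G.addEdges U t).inDegVec κ := by
  funext (w : G.V) c
  change ∑ e : G.E ⊕ {v // v ∈ U}, _ = ∑ e : G.E ⊕ {v // v ∈ U}, _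
  simp only [Fintype.sum_sum_type]
  congr 1
  exact Fintype.sum_equiv τ _ _ fun u => by
    simp only [addEdges, Sum.elim_inr, Function.comp_apply, hτ]
    rfl

theorem outDegVec_addEdges (t t' : {v // v ∈ U} → G.V) :
    (G.addEdges U t).outDegVec κ = (G.addEdges U t').outDegVec κ := by
  funext (w : G.V) c
  change ∑ e : G.E ⊕ {v // v ∈ U}, _ = ∑ e : G.E ⊕ {v // v ∈ U}, _
  simp only [Fintype.sum_sum_type]
  rfl

end AddEdges

theorem sum_sign_mul_dpf_addEdges_eq_zero (y : ((Fin k ⊕ Fin k) → ℕ) → F) (G : MGraph)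
    (U : Finset G.V) (hU : k < U.card) (s : {v // v ∈ U} → G.V) :
    ∑ π : Equiv.Perm {v // v ∈ U},
      ((Equiv.Perm.sign π : ℤ) : F) * dpf k y (G.addEdges U (s ∘ π)) = 0 := by
  change ∑ π, _ * ∑ κ : G.E ⊕ {v // v ∈ U} → Fin k, _ = 0
  simp only [Finset.mul_sum]
  rw [Finset.sum_comm]
  refine Fintype.sum_eq_zero _ fun κ => ?_
  obtain ⟨a, b, hab, hκab⟩ := Fintype.exists_ne_map_eq_of_card_lt (κ ∘ .inr)
    (by simpa using hU)
  refine Equiv.Perm.sum_sign_mul_eq_zero_of_mul_swap_s17 _ hab fun π => ?_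
  change ∏ w, y (Sum.elim ((G.addEdges U ((s ∘ π) ∘ _)).inDegVec κ w) _) = _
  rw [inDegVec_addEdges_comp_perm _ _ _ _ _ (Equiv.apply_swap_eq_self hκab),
    outDegVec_addEdges _ _ _ _ (s ∘ π)]
  rfl

end MGraph

/-- the directed partition function is multiplicative, and the signed sum
over arc additions on a set of `k+1` vertices vanishes. Here a directed multigraph is an
`MGraph`, the pair `G.ends e` being read as an arc from its first to its second coordinate,
so that `G.addEdges U t` adds the arcs `(u, t u)` for `u ∈ U`. -/
theorem dpf_multiplicative_and_signed_addArcs_eq_zero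
    {F : Type} [CommRing F] (k : ℕ) (y : ((Fin k ⊕ Fin k) → ℕ) → F) :
    (MGraph.dpf k y MGraph.empty = 1 ∧
      ∀ G H : MGraph, MGraph.dpf k y (G.disjUnion H) = MGraph.dpf k y G * MGraph.dpf k y H) ∧
    ∀ (G : MGraph) (U : Finset G.V), U.card = k + 1 → ∀ s : {v // v ∈ U} → G.V,
      ∑ π : Equiv.Perm {v // v ∈ U},
        ((Equiv.Perm.sign π : ℤ) : F) * MGraph.dpf k y (G.addEdges U (s ∘ π)) = 0 :=
  ⟨⟨MGraph.dpf_empty y, MGraph.dpf_disjUnion y⟩, fun G U hU s =>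
    MGraph.sum_sign_mul_dpf_addEdges_eq_zero y G U (by omega) s⟩
end
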